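/- arXiv:math/0106028 — 7 statements merged into one kernel-verified Lean document; each statement's English description precedes it below -/
import Mathlib

section
/- Let Q(a,b,c;λ) = a²λ³ - abλ² - acλ + 1 + bc. If Q(a,b,c;λ) = 0, then for every real s one has Q(a+s, b+sλ, c+sλ²; λ) = 0. -/
theorem eq1_linearly_degenerate (a b c l : ℝ)
    (h : a^2*l^3 - a*b*l^2 - a*c*l + 1 + b*c = 0) :
    ∀ s : ℝ, (a+s)^2*l^3 - (a+s)*(b+s*l)*l^2 - (a+s)*(c+s*l^2)*l
        + 1 + (b+s*l)*(c+s*l^2) = 0 := by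
  intro s; nlinarith [h, sq_nonneg s, sq_nonneg l]
end

section
/- Let a, b, c, λ be real numbers with λ³ + aλ² - 2bλ + c = 0, and set y⁰ = λ, y¹ = aλ - b, y² = bλ - c, y³ = cλ - b² + ac. Then all seven cubic equations hold: (y⁰)³ + y⁰y¹ - y² = 0; (y²)² + y³(y⁰)² = 0; y¹y²y³ + y⁰(y³)² - (y²)³ = 0; y²(y⁰)² + y¹y² + y⁰y³ = 0; (y³)² - y¹(y²)² + y⁰y²y³ + y³(y¹)² = 0; y⁰y¹y³ - y⁰(y²)² - y²y³ = 0; y⁰y² + y¹(y⁰)² + (y¹)² + y³ = 0. -/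
theorem wdvv_focal_on_cubics (a b c l : ℝ)
    (h : l^3 + a*l^2 - 2*b*l + c = 0) :
    let y0 := l
    let y1 := a*l - b
    let y2 := b*l - c
    let y3 := c*l - b^2 + a*c
    y0^3 + y0*y1 - y2 = 0 ∧
    y2^2 + y3*y0^2 = 0 ∧
    y1*y2*y3 + y0*y3^2 - y2^3 = 0 ∧
    y2*y0^2 + y1*y2 + y0*y3 = 0 ∧
    y3^2 - y1*y2^2 + y0*y2*y3 + y3*y1^2 = 0 ∧
    y0*y1*y3 - y0*y2^2 - y2*y3 = 0 ∧
    y0*y2 + y1*y0^2 + y1^2 + y3 = 0 := by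
  refine ⟨by linear_combination h, by linear_combination c*h,
    by linear_combination (c^2 - b^3 + a*b*c)*h, by linear_combination b*h,
    by linear_combination (b*c - a*b^2 + a^2*c)*h,
    by linear_combination (-b^2 + a*c)*h, by linear_combination a*h⟩
end

section
/- For real numbers x₀, x₁, x₂ with x₂ ≠ 0, the point (y⁰,y¹,y²,y³) = (x₀/x₂, (x₁x₂ - x₀²)/x₂², x₀x₁/x₂², -x₁²/x₂²) satisfies all seven cubics: (y⁰)³ + y⁰y¹ - y² = 0; (y²)² + y³(y⁰)² = 0; y¹y²y³ + y⁰(y³)² - (y²)³ = 0; y²(y⁰)² + y¹y² + y⁰y³ = 0; (y³)² - y¹(y²)² + y⁰y²y³ + y³(y¹)² = 0; y⁰y¹y³ - y⁰(y²)² - y²y³ = 0; y⁰y² + y¹(y⁰)² + (y¹)² + y³ = 0. -/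
theorem projected_veronese_on_cubics (x0 x1 x2 : ℝ) (hx2 : x2 ≠ 0) :
    let y0 := x0/x2
    let y1 := (x1*x2 - x0^2)/x2^2
    let y2 := x0*x1/x2^2
    let y3 := -x1^2/x2^2
    y0^3 + y0*y1 - y2 = 0 ∧
    y2^2 + y3*y0^2 = 0 ∧
    y1*y2*y3 + y0*y3^2 - y2^3 = 0 ∧
    y2*y0^2 + y1*y2 + y0*y3 = 0 ∧
    y3^2 - y1*y2^2 + y0*y2*y3 + y3*y1^2 = 0 ∧
    y0*y1*y3 - y0*y2^2 - y2*y3 = 0 ∧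
    y0*y2 + y1*y0^2 + y1^2 + y3 = 0 := by
  refine ⟨?_, ?_, ?_, ?_, ?_, ?_, ?_⟩ <;> field_simp <;> ring
end

section
/- For real numbers x₀, x₁, x₂ with x₁ ≠ 0 and x₂ ≠ 0, the point (y⁰,y¹,y²,y³) = (-x₀/x₁, -x₁/x₂, (x₂² - x₀x₁)/(x₁x₂), -x₀²/(x₁x₂)) satisfies: 1 + y⁰(y¹)² + y¹y² = 0; y¹(y⁰)² - y³ = 0; (y⁰)³ + y⁰y²y³ + (y³)² = 0; y⁰ + y⁰y¹y² + y¹y³ = 0; y⁰y³ - y²(y⁰)² + y¹(y³)² - y³(y²)² = 0; (y⁰)² + y⁰y¹y³ + y²y³ = 0; y⁰y¹ + (y¹)²y³ - y² - y¹(y²)² = 0. -/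
/-!
The point lies on the surface `y₃ = y₁ y₀²`, `y₁ y₂ = -1 - y₀ y₁²` (the first two cubics), and the
other five cubics lie in the ideal these two generate. Modulo `y₃ - y₁ y₀²` the third, fourth and
sixth cubics become multiples of `1 + y₀ y₁² + y₁ y₂`, while the fifth and seventh reduce to
multiples of `y₀ y₁ + y₀² y₁³ - y₂ - y₁ y₂²`, which vanishes on the surface because `y₁` is a unit
there: `y₁ (y₀ y₁ + y₂) = -1`.
-/

section FocalCubics

variable {R : Type*} [CommRing R] {y0 y1 y2 y3 : R}

theorem quartic_eq_zero_of_first_cubic (h : 1 + y0*y1^2 + y1*y2 = 0) :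
    y0*y1 + y0^2*y1^3 - y2 - y1*y2^2 = 0 := by
  have hunit : y1 * (-(y0*y1 + y2)) = 1 := by linear_combination -h
  have hmul : y1 * (y0*y1 + y0^2*y1^3 - y2 - y1*y2^2) = 0 := by
    linear_combination (y0*y1^2 - y1*y2) * h
  exact (IsUnit.of_mul_eq_one _ hunit).mul_right_eq_zero.mp hmul

theorem focal_cubics_of_first_two (h₁ : 1 + y0*y1^2 + y1*y2 = 0) (h₂ : y1*y0^2 - y3 = 0) :
    y0^3 + y0*y2*y3 + y3^2 = 0 ∧
    y0 + y0*y1*y2 + y1*y3 = 0 ∧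
    y0*y3 - y2*y0^2 + y1*y3^2 - y3*y2^2 = 0 ∧
    y0^2 + y0*y1*y3 + y2*y3 = 0 ∧
    y0*y1 + y1^2*y3 - y2 - y1*y2^2 = 0 := by
  have hG := quartic_eq_zero_of_first_cubic h₁
  refine ⟨?_, ?_, ?_, ?_, ?_⟩
  · linear_combination y0^3 * h₁ - (y0*y2 + y3 + y1*y0^2) * h₂
  · linear_combination y0 * h₁ - y1 * h₂
  · linear_combination y0^2 * hG - (y0 + y1*y3 + y1^2*y0^2 - y2^2) * h₂
  · linear_combination y0^2 * h₁ - (y0*y1 + y2) * h₂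
  · linear_combination hG - y1^2 * h₂

end FocalCubics

theorem projected_veronese_eq1_on_cubics (x0 x1 x2 : ℝ)
    (hx1 : x1 ≠ 0) (hx2 : x2 ≠ 0) :
    let y0 := -x0/x1
    let y1 := -x1/x2
    let y2 := (x2^2 - x0*x1)/(x1*x2)
    let y3 := -x0^2/(x1*x2)
    1 + y0*y1^2 + y1*y2 = 0 ∧
    y1*y0^2 - y3 = 0 ∧
    y0^3 + y0*y2*y3 + y3^2 = 0 ∧
    y0 + y0*y1*y2 + y1*y3 = 0 ∧
    y0*y3 - y2*y0^2 + y1*y3^2 - y3*y2^2 = 0 ∧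
    y0^2 + y0*y1*y3 + y2*y3 = 0 ∧
    y0*y1 + y1^2*y3 - y2 - y1*y2^2 = 0 := by
  intro y0 y1 y2 y3
  have h₁ : 1 + y0*y1^2 + y1*y2 = 0 := by
    simp only [y0, y1, y2]
    field_simp
    ring
  have h₂ : y1*y0^2 - y3 = 0 := by
    simp only [y0, y1, y3]
    field_simp
    ring
  exact ⟨h₁, h₂, focal_cubics_of_first_two h₁ h₂⟩
end

section
/- For real b ≠ 0 and all real a, c, λ: λ³ - ((2c-a)/b)λ² - (1 - (c² - ac)/b²)λ + c/b = (λ - c/b)(λ² - ((c-a)/b)λ - 1). Consequently the characteristic velocities of the system a_t=b_x, b_t=c_x, c_t=((c²+b²-ac)/b)_x are c/b and (c-a ± √(4b² + (c-a)²))/(2b). -/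
theorem eq4_charpoly_factors (b : ℝ) (hb : b ≠ 0) (a c l : ℝ) :
    l^3 - ((2*c - a)/b)*l^2 - (1 - (c^2 - a*c)/b^2)*l + c/b
      = (l - c/b) * (l^2 - ((c - a)/b)*l - 1) := by
  field_simp
  ring
end

section
/- Let a, b, c : ℝ² → ℝ be continuously differentiable functions of (x,t) with a never zero, satisfying a_t = b_x, b_t = c_x and c_t = (bc/a)_x. Then the function R = c/a satisfies R_t = (b/a)·R_x. That is, c/a is a Riemann invariant of the system with characteristic velocity b/a. -/
/-!
Write `c = a R` with `R = c / a`, so that `b c / a = b R`. By the product rule the first and third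
equations become `a_t R + a R_t = c_t` and `c_t = b_x R + b R_x`; since `a_t = b_x`, the terms in `R`
cancel and `a R_t = b R_x`.
-/

open ContinuousLinearMap

theorem mul_fderiv_apply_eq_of_fderiv_mul_apply_eq {𝕜 E : Type*} [NontriviallyNormedField 𝕜]
    [NormedAddCommGroup E] [NormedSpace 𝕜 E] {a b R : E → 𝕜} {p v w : E}
    (ha : DifferentiableAt 𝕜 a p) (hb : DifferentiableAt 𝕜 b p) (hR : DifferentiableAt 𝕜 R p)
    (hab : fderiv 𝕜 a p v = fderiv 𝕜 b p w)
    (habR : fderiv 𝕜 (fun q => a q * R q) p v = fderiv 𝕜 (fun q => b q * R q) p w) :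
    a p * fderiv 𝕜 R p v = b p * fderiv 𝕜 R p w := by
  rw [fderiv_fun_mul ha hR, fderiv_fun_mul hb hR] at habR
  simpa only [add_apply, smul_apply, smul_eq_mul, hab, add_left_inj] using habR

theorem riemann_invariant_eq3_general (a b c : ℝ × ℝ → ℝ)
    (ha : ContDiff ℝ 1 a) (hb : ContDiff ℝ 1 b) (hc : ContDiff ℝ 1 c)
    (ha0 : ∀ p, a p ≠ 0)
    (hsys1 : ∀ p, fderiv ℝ a p (0, 1) = fderiv ℝ b p (1, 0))
    (hsys3 : ∀ p, fderiv ℝ c p (0, 1) =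
        fderiv ℝ (fun q => b q * c q / a q) p (1, 0)) :
    ∀ p, fderiv ℝ (fun q => c q / a q) p (0, 1) =
      (b p / a p) * fderiv ℝ (fun q => c q / a q) p (1, 0) := by
  intro p
  set R := fun q => c q / a q
  have hda : DifferentiableAt ℝ a p := ha.differentiable one_ne_zero p
  have hR : DifferentiableAt ℝ R p := by
    simp only [R, div_eq_mul_inv]
    exact (hc.differentiable one_ne_zero p).fun_mul (hda.fun_inv (ha0 p))
  have hc_eq : (fun q => a q * R q) = c := funext fun q => mul_div_cancel₀ (c q) (ha0 q)
  have hbc_eq : (fun q => b q * c q / a q) = fun q => b q * R q :=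
    funext fun q => mul_div_assoc (b q) (c q) (a q)
  have key : a p * fderiv ℝ R p (0, 1) = b p * fderiv ℝ R p (1, 0) :=
    mul_fderiv_apply_eq_of_fderiv_mul_apply_eq hda (hb.differentiable one_ne_zero p) hR
      (hsys1 p) (by rw [hc_eq, ← hbc_eq]; exact hsys3 p)
  rw [div_mul_eq_mul_div, eq_div_iff (ha0 p), ← key, mul_comm]

theorem riemann_invariant_eq3 (a b c : ℝ × ℝ → ℝ)
    (ha : ContDiff ℝ 1 a) (hb : ContDiff ℝ 1 b) (hc : ContDiff ℝ 1 c)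
    (ha0 : ∀ p, a p ≠ 0)
    (hsys1 : ∀ p, fderiv ℝ a p (0, 1) = fderiv ℝ b p (1, 0))
    (hsys2 : ∀ p, fderiv ℝ b p (0, 1) = fderiv ℝ c p (1, 0))
    (hsys3 : ∀ p, fderiv ℝ c p (0, 1) =
        fderiv ℝ (fun q => b q * c q / a q) p (1, 0)) :
    ∀ p, fderiv ℝ (fun q => c q / a q) p (0, 1) =
      (b p / a p) * fderiv ℝ (fun q => c q / a q) p (1, 0) :=
  riemann_invariant_eq3_general a b c ha hb hc ha0 hsys1 hsys3
end

section
/- Let a, b, c : ℝ² → ℝ be continuously differentiable with b never zero, satisfying a_t = b_x, b_t = c_x and c_t = ((c²-1)/b)_x. Then R⁺ = (c+1)/b satisfies R⁺_t = ((c-1)/b)·R⁺_x, and R⁻ = (c-1)/b satisfies R⁻_t = ((c+1)/b)·R⁻_x. -/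
/-!
Write `R = (c + s) / b`. By the quotient rule, `R_t` and `R_x` are linear in `b_x, b_t, c_x, c_t`;
substituting `b_t = c_x` and `c_t = ((c² - 1) / b)_x` expresses `R_t` through `b_x, c_x` alone, and
then `R_t - ((c - s) / b) R_x = (1 - s²) b_x / b³`, which vanishes for `s = ±1`.
-/

open ContinuousLinearMap

variable {𝕜 E : Type*} [NontriviallyNormedField 𝕜] [NormedAddCommGroup E] [NormedSpace 𝕜 E]

theorem fderiv_fun_div_apply {f g : E → 𝕜} {x : E} (hf : DifferentiableAt 𝕜 f x)
    (hg : DifferentiableAt 𝕜 g x) (hx : g x ≠ 0) (v : E) :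
    fderiv 𝕜 (fun y => f y / g y) x v =
      (g x * fderiv 𝕜 f x v - f x * fderiv 𝕜 g x v) / g x ^ 2 := by
  have hinv : HasFDerivAt (fun y => (g y)⁻¹) _ x := (hasFDerivAt_inv hx).comp x hg.hasFDerivAt
  simp only [div_eq_mul_inv]
  rw [(hf.hasFDerivAt.fun_mul hinv).fderiv]
  simp only [add_apply, smul_apply, comp_apply, toSpanSingleton_apply, smul_eq_mul, mul_neg]
  field_simp
  ring

theorem fderiv_fun_sq_sub_one_apply {c : E → 𝕜} {x : E} (hc : DifferentiableAt 𝕜 c x) (v : E) :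
    fderiv 𝕜 (fun y => c y ^ 2 - 1) x v = 2 * c x * fderiv 𝕜 c x v := by
  rw [fderiv_sub_const, fderiv_fun_pow 2 hc]
  simp

theorem fderiv_riemannInvariant_apply {b c : E → 𝕜} {p v w : E} {s : 𝕜} (hs : s ^ 2 = 1)
    (hb : DifferentiableAt 𝕜 b p) (hc : DifferentiableAt 𝕜 c p) (hb0 : b p ≠ 0)
    (hbc : fderiv 𝕜 b p v = fderiv 𝕜 c p w)
    (hcb : fderiv 𝕜 c p v = fderiv 𝕜 (fun q => (c q ^ 2 - 1) / b q) p w) :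
    fderiv 𝕜 (fun q => (c q + s) / b q) p v =
      (c p - s) / b p * fderiv 𝕜 (fun q => (c q + s) / b q) p w := by
  have hc2 : DifferentiableAt 𝕜 (fun q => c q ^ 2 - 1) p := by fun_prop
  have hcs : DifferentiableAt 𝕜 (fun q => c q + s) p := hc.add_const s
  rw [fderiv_fun_div_apply hc2 hb hb0, fderiv_fun_sq_sub_one_apply hc] at hcb
  rw [fderiv_fun_div_apply hcs hb hb0, fderiv_fun_div_apply hcs hb hb0, fderiv_add_const, hcb, hbc]
  field_simp
  linear_combination (-fderiv 𝕜 b p w) * hs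

theorem riemann_invariants_eq5_general (b c : ℝ × ℝ → ℝ)
    (hb : ContDiff ℝ 1 b) (hc : ContDiff ℝ 1 c)
    (hb0 : ∀ p, b p ≠ 0)
    (hsys2 : ∀ p, fderiv ℝ b p (0, 1) = fderiv ℝ c p (1, 0))
    (hsys3 : ∀ p, fderiv ℝ c p (0, 1) =
        fderiv ℝ (fun q => (c q ^ 2 - 1) / b q) p (1, 0)) :
    (∀ p, fderiv ℝ (fun q => (c q + 1) / b q) p (0, 1) =
        ((c p - 1) / b p) * fderiv ℝ (fun q => (c q + 1) / b q) p (1, 0)) ∧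
    (∀ p, fderiv ℝ (fun q => (c q - 1) / b q) p (0, 1) =
        ((c p + 1) / b p) * fderiv ℝ (fun q => (c q - 1) / b q) p (1, 0)) := by
  have transport (p : ℝ × ℝ) {s : ℝ} (hs : s ^ 2 = 1) :=
    fderiv_riemannInvariant_apply hs (hb.differentiable one_ne_zero p)
      (hc.differentiable one_ne_zero p) (hb0 p) (hsys2 p) (hsys3 p)
  refine ⟨fun p => transport p (one_pow 2), fun p => ?_⟩
  simpa [← sub_eq_add_neg] using transport p (s := -1) (by norm_num)

theorem riemann_invariants_eq5 (a b c : ℝ × ℝ → ℝ)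
    (ha : ContDiff ℝ 1 a) (hb : ContDiff ℝ 1 b) (hc : ContDiff ℝ 1 c)
    (hb0 : ∀ p, b p ≠ 0)
    (hsys1 : ∀ p, fderiv ℝ a p (0, 1) = fderiv ℝ b p (1, 0))
    (hsys2 : ∀ p, fderiv ℝ b p (0, 1) = fderiv ℝ c p (1, 0))
    (hsys3 : ∀ p, fderiv ℝ c p (0, 1) =
        fderiv ℝ (fun q => (c q ^ 2 - 1) / b q) p (1, 0)) :
    (∀ p, fderiv ℝ (fun q => (c q + 1) / b q) p (0, 1) =
        ((c p - 1) / b p) * fderiv ℝ (fun q => (c q + 1) / b q) p (1, 0)) ∧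
    (∀ p, fderiv ℝ (fun q => (c q - 1) / b q) p (0, 1) =
        ((c p + 1) / b p) * fderiv ℝ (fun q => (c q - 1) / b q) p (1, 0)) :=
  riemann_invariants_eq5_general b c hb hc hb0 hsys2 hsys3
end
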